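/- Skew-symmetry of the staggered energy-based DG form with central fluxes: With the notation of the context and with β = τ = 0, for all primary broken functions w, φ of degree q_u − 1 and dual broken functions v, ψ of degree q_v, B_c(w,v;φ,ψ) + B_c(φ,ψ;w,v) = 0. -/

import Mathlib

open Polynomial

section AuxIBP

/-- Change of variables shifting `[h/2, h]` to `[0, h/2]`. -/
lemma poly_half_shift (p q : Polynomial ℝ) (h : ℝ) :
    (∫ s in (h/2)..h, (derivative p).eval s * q.eval (s - h/2))
      = ∫ s in (0:ℝ)..(h/2), q.eval s * (derivative p).eval (s + h/2) := by
  have H := intervalIntegral.integral_comp_add_right (a := (0:ℝ)) (b := h/2)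
    (fun x => (derivative p).eval x * q.eval (x - h/2)) (h/2)
  rw [show (0:ℝ) + h/2 = h/2 by ring, show h/2 + h/2 = h by ring] at H
  rw [← H]
  apply intervalIntegral.integral_congr
  intro x _
  simp [add_sub_cancel_right, mul_comm]

/-- Integration by parts for a polynomial against a shifted polynomial. -/
lemma poly_ibp (p q : Polynomial ℝ) (h : ℝ) :
    (∫ s in (0:ℝ)..(h/2), (derivative p).eval s * q.eval (s + h/2))
      + (∫ s in (0:ℝ)..(h/2), p.eval s * (derivative q).eval (s + h/2))
      = p.eval (h/2) * q.eval h - p.eval 0 * q.eval (h/2) := by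
  have int1 : IntervalIntegrable (fun s : ℝ => (derivative p).eval s * q.eval (s + h/2))
      MeasureTheory.volume 0 (h/2) := (Continuous.intervalIntegrable (by fun_prop) _ _)
  have int2 : IntervalIntegrable (fun s : ℝ => p.eval s * (derivative q).eval (s + h/2))
      MeasureTheory.volume 0 (h/2) := (Continuous.intervalIntegrable (by fun_prop) _ _)
  have H := intervalIntegral.integral_deriv_mul_eq_sub
    (u := fun s => p.eval s) (v := fun s => q.eval (s + h/2))
    (u' := fun s => (derivative p).eval s)
    (v' := fun s => (derivative q).eval (s + h/2))
    (a := (0:ℝ)) (b := h/2)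
    (fun x _ => p.hasDerivAt x)
    (fun x _ => by
      simpa [Function.comp_def] using (q.hasDerivAt (x + h/2)).comp x ((hasDerivAt_id x).add_const (h/2)))
    ((Continuous.intervalIntegrable (by fun_prop) _ _))
    ((Continuous.intervalIntegrable (by fun_prop) _ _))
  rw [intervalIntegral.integral_add int1 int2] at H
  rw [show h/2 + h/2 = h by ring, show (0:ℝ) + h/2 = h/2 by ring] at H
  exact H

/-- The per-element cancellation identity. -/
lemma poly_perj (h : ℝ) (w wm v vp φ ψ : Polynomial ℝ) :
    ((∫ s in (0:ℝ)..(h/2), (derivative φ).eval s * v.eval (s + h/2))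
      + (∫ s in (h/2)..h, (derivative φ).eval s * vp.eval (s - h/2))
      - φ.eval h * vp.eval (h/2) + φ.eval 0 * v.eval (h/2))
    + ((∫ s in (0:ℝ)..(h/2), (derivative ψ).eval s * wm.eval (s + h/2))
      + (∫ s in (h/2)..h, (derivative ψ).eval s * w.eval (s - h/2))
      - ψ.eval h * w.eval (h/2) + ψ.eval 0 * wm.eval (h/2))
    + ((∫ s in (0:ℝ)..(h/2), (derivative w).eval s * ψ.eval (s + h/2))
      + (∫ s in (h/2)..h, (derivative wm).eval s * ψ.eval (s - h/2))
      - wm.eval h * ψ.eval (h/2) + w.eval 0 * ψ.eval (h/2))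
    + ((∫ s in (0:ℝ)..(h/2), (derivative vp).eval s * φ.eval (s + h/2))
      + (∫ s in (h/2)..h, (derivative v).eval s * φ.eval (s - h/2))
      - v.eval h * φ.eval (h/2) + vp.eval 0 * φ.eval (h/2)) = 0 := by
  rw [poly_half_shift φ vp h, poly_half_shift ψ w h, poly_half_shift wm ψ h,
    poly_half_shift v φ h]
  linear_combination poly_ibp φ v h + poly_ibp vp φ h + poly_ibp ψ wm h + poly_ibp w ψ h

/-- Summing over a periodic grid, index shifts are harmless. -/
lemma sum_shift_trick {N : ℕ} [NeZero N] (F G K : ZMod N → ℝ)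
    (hz : ∀ j, F j + G (j+1) + K (j-1) = 0) :
    ∑ j : ZMod N, (F j + G j + K j) = 0 := by
  rw [Finset.sum_add_distrib, Finset.sum_add_distrib]
  have hG : ∑ j : ZMod N, G j = ∑ j : ZMod N, G (j+1) :=
    (Fintype.sum_equiv (Equiv.addRight 1) _ _ fun j => rfl).symm
  have hK : ∑ j : ZMod N, K j = ∑ j : ZMod N, K (j-1) :=
    (Fintype.sum_equiv (Equiv.subRight 1) _ _ fun j => rfl).symm
  rw [hG, hK, ← Finset.sum_add_distrib, ← Finset.sum_add_distrib]
  exact Finset.sum_eq_zero fun j _ => hz j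

end AuxIBP


open Polynomial

/-- Squared L² norm of a broken (piecewise polynomial) function on a periodic grid
of `N` elements each of width `h`, in local coordinates `s ∈ [0,h]`. -/
noncomputable def brokenNormSq (N : ℕ) [NeZero N] (h : ℝ)
    (p : ZMod N → Polynomial ℝ) : ℝ :=
  ∑ j : ZMod N, ∫ s in (0:ℝ)..h, (p j).eval s ^ 2

/-- The numerical flux `H_j` of the staggered energy-based DG method, located at
the primary node `jh`, interior to the dual element `J_j`. -/
noncomputable def HfluxS (N : ℕ) [NeZero N] (h c β : ℝ)
    (w v : ZMod N → Polynomial ℝ) (j : ZMod N) : ℝ :=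
  (v j).eval (h / 2) - β * c ^ 2 * ((w (j - 1)).eval h - (w j).eval 0)

/-- The numerical flux `G_j` of the staggered energy-based DG method, located at
the primary element center `(j+1/2)h`, the shared boundary of `J_j` and `J_{j+1}`. -/
noncomputable def GfluxS (N : ℕ) [NeZero N] (h c τ : ℝ)
    (w v : ZMod N → Polynomial ℝ) (j : ZMod N) : ℝ :=
  (w j).eval (h / 2) - τ / c ^ 2 * ((v j).eval h - (v (j + 1)).eval 0)

/-- The staggered energy-based DG bilinear form `B_c(w,v;φ,ψ)`. -/
noncomputable def BformS (N : ℕ) [NeZero N] (h c β τ : ℝ)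
    (w v φ ψ : ZMod N → Polynomial ℝ) : ℝ :=
  -(c ^ 2) * (∑ j : ZMod N,
      ((∫ s in (0:ℝ)..(h / 2), (derivative (φ j)).eval s * (v j).eval (s + h / 2))
        + (∫ s in (h / 2)..h, (derivative (φ j)).eval s * (v (j + 1)).eval (s - h / 2))
        - (φ j).eval h * HfluxS N h c β w v (j + 1)
        + (φ j).eval 0 * HfluxS N h c β w v j))
    - c ^ 2 * (∑ j : ZMod N,
      ((∫ s in (0:ℝ)..(h / 2), (derivative (ψ j)).eval s * (w (j - 1)).eval (s + h / 2))
        + (∫ s in (h / 2)..h, (derivative (ψ j)).eval s * (w j).eval (s - h / 2))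
        - (ψ j).eval h * GfluxS N h c τ w v j
        + (ψ j).eval 0 * GfluxS N h c τ w v (j - 1)))

/-- Skew-symmetry of the staggered energy-based DG form with central fluxes
(`β = τ = 0`). -/
theorem staggered_central_flux_skew_symmetry
    (N : ℕ) [NeZero N] (hN : 1 ≤ N) (h c : ℝ) (hh : 0 < h) (hc : 0 < c)
    (qu qv : ℕ) (hqu : 1 ≤ qu)
    (w φ v ψ : ZMod N → Polynomial ℝ)
    (hw : ∀ j, (w j).natDegree ≤ qu - 1) (hφ : ∀ j, (φ j).natDegree ≤ qu - 1)
    (hv : ∀ j, (v j).natDegree ≤ qv) (hψ : ∀ j, (ψ j).natDegree ≤ qv) :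
    BformS N h c 0 0 w v φ ψ + BformS N h c 0 0 φ ψ w v = 0 := by
  simp only [BformS, HfluxS, GfluxS, zero_mul, zero_div, mul_zero, sub_zero]
  have key4 : ∀ a b d e : ℝ, a + b + d + e = 0 →
      -c ^ 2 * a - c ^ 2 * b + (-c ^ 2 * d - c ^ 2 * e) = 0 := by
    intro a b d e hab
    linear_combination (-(c ^ 2)) * hab
  refine key4 _ _ _ _ ?_
  rw [← Finset.sum_add_distrib, ← Finset.sum_add_distrib, ← Finset.sum_add_distrib]
  have main0 := sum_shift_trick
    (F := fun j : ZMod N =>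
      ((∫ s in (0:ℝ)..(h/2), (derivative (φ j)).eval s * (v j).eval (s + h/2))
        + (∫ s in (h/2)..h, (derivative (φ j)).eval s * (v (j+1)).eval (s - h/2))
        - (φ j).eval h * (v (j+1)).eval (h/2) + (φ j).eval 0 * (v j).eval (h/2))
      + ((∫ s in (0:ℝ)..(h/2), (derivative (ψ j)).eval s * (w (j-1)).eval (s + h/2))
        + (∫ s in (h/2)..h, (derivative (ψ j)).eval s * (w j).eval (s - h/2))
        - (ψ j).eval h * (w j).eval (h/2) + (ψ j).eval 0 * (w (j-1)).eval (h/2))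
      + ((∫ s in (0:ℝ)..(h/2), (derivative (w j)).eval s * (ψ j).eval (s + h/2))
        + (w j).eval 0 * (ψ j).eval (h/2))
      + ((∫ s in (h/2)..h, (derivative (v j)).eval s * (φ j).eval (s - h/2))
        - (v j).eval h * (φ j).eval (h/2)))
    (G := fun j : ZMod N =>
      (∫ s in (0:ℝ)..(h/2), (derivative (v j)).eval s * (φ (j-1)).eval (s + h/2))
        + (v j).eval 0 * (φ (j-1)).eval (h/2))
    (K := fun j : ZMod N =>
      (∫ s in (h/2)..h, (derivative (w j)).eval s * (ψ (j+1)).eval (s - h/2))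
        - (w j).eval h * (ψ (j+1)).eval (h/2))
    (fun j => by
      simp only [add_sub_cancel_right, sub_add_cancel]
      linear_combination poly_perj h (w j) (w (j-1)) (v j) (v (j+1)) (φ j) (ψ j))
  refine Eq.trans (Finset.sum_congr rfl fun j _ => ?_) main0
  ring
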